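/- Let Γ = Cay(G, S_{i,j} : 1 ≤ i,j ≤ m) be an m-Cayley digraph of a finite group G. Then Γ is mCI if and only if every semiregular subgroup of Aut(Γ) isomorphic to G (necessarily with m orbits) is conjugate to R(G) in Aut(Γ). -/

import Mathlib

/-- Right multiplication permutation `R(g) : x_i ↦ (xg)_i` on `V = Fin m × G`. -/
def Rperm (m : ℕ) {G : Type*} [Group G] (g : G) : Equiv.Perm (Fin m × G) where
  toFun v := (v.1, v.2 * g)
  invFun v := (v.1, v.2 * g⁻¹)
  left_inv v := by simp
  right_inv v := by simp

/-- The subgroup `R(G) = {R(g) : g ∈ G}` of `Sym(V)`. -/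
def RG (m : ℕ) (G : Type*) [Group G] : Subgroup (Equiv.Perm (Fin m × G)) where
  carrier := {σ | ∃ g : G, σ = Rperm m g}
  one_mem' := ⟨1, Equiv.ext fun v => by simp [Rperm]⟩
  mul_mem' := by
    rintro _ _ ⟨g, rfl⟩ ⟨h, rfl⟩
    exact ⟨h * g, Equiv.ext fun v => by simp [Rperm, mul_assoc]⟩
  inv_mem' := by
    rintro _ ⟨g, rfl⟩
    exact ⟨g⁻¹, Equiv.ext fun v => by
      simp [Rperm, Equiv.Perm.inv_def]⟩

/-- The arc relation of the `m`-Cayley digraph `Cay(G, S_{i,j})`: there is an arc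
from `x_i` to `(sx)_j` for each `s ∈ S_{i,j}`. -/
def arcRel (m : ℕ) {G : Type*} [Group G] (S : Fin m → Fin m → Set G)
    (u v : Fin m × G) : Prop :=
  v.2 * u.2⁻¹ ∈ S u.1 v.1

/-- The automorphism group of the `m`-Cayley digraph `Cay(G, S_{i,j})`, as a
subgroup of `Sym(V)`. -/
def digraphAut (m : ℕ) (G : Type*) [Group G] (S : Fin m → Fin m → Set G) :
    Subgroup (Equiv.Perm (Fin m × G)) where
  carrier := {e | ∀ u v : Fin m × G, arcRel m S (e u) (e v) ↔ arcRel m S u v}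
  one_mem' := by intro u v; simp
  mul_mem' := by
    intro a b ha hb u v
    have := (ha (b u) (b v)).trans (hb u v)
    simpa using this
  inv_mem' := by
    intro a ha u v
    have := ha (a⁻¹ u) (a⁻¹ v)
    simpa using this.symm

/-- The `m`-Cayley digraph `Cay(G, S_{i,j})` is mCI: every `m`-Cayley digraph of
`G` isomorphic to it is its image under an element of the normalizer of `R(G)`
in `Sym(V)`. -/
def IsMCI (m : ℕ) (G : Type*) [Group G] (S : Fin m → Fin m → Set G) : Prop :=
  ∀ T : Fin m → Fin m → Set G, (∀ i, (1 : G) ∉ T i i) →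
    (∃ e : Equiv.Perm (Fin m × G),
      ∀ u v : Fin m × G, arcRel m S u v ↔ arcRel m T (e u) (e v)) →
    ∃ n ∈ Subgroup.normalizer ((RG m G : Subgroup (Equiv.Perm (Fin m × G))) : Set (Equiv.Perm (Fin m × G))),
      ∀ u v : Fin m × G, arcRel m S u v ↔ arcRel m T (n u) (n v)

/-! If `Γ ≅ Σ = Cay(G, T)` via `e`, then `e⁻¹ R(G) e` is a semiregular copy of `G` in `Aut(Γ)`;
it is conjugate to `R(G)` by some `a ∈ Aut(Γ)` exactly when `e a` normalizes `R(G)`.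
Conversely, a semiregular subgroup `H ≅ G` acts freely with `m` orbits, so choosing orbit
representatives gives a relabelling `e` of the vertices with `e H e⁻¹ = R(G)`; transporting
the arcs of `Γ` along `e` then yields an `m`-Cayley digraph `Σ ≅ Γ`, to which mCI applies. -/

open Equiv

section Rperm

variable {G : Type*} [Group G] {m : ℕ}

@[simp]
lemma Rperm_apply (g : G) (v : Fin m × G) : Rperm m g v = (v.1, v.2 * g) := rfl

/-- `g ↦ R(g⁻¹)`: since `R` reverses products, this is the homomorphism with image `R(G)`. -/
def RpermInvHom (m : ℕ) (G : Type*) [Group G] : G →* Perm (Fin m × G) where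
  toFun g := Rperm m g⁻¹
  map_one' := Equiv.ext fun v => by simp
  map_mul' g h := Equiv.ext fun v => by simp [mul_assoc]

lemma range_RpermInvHom : (RpermInvHom m G).range = RG m G := by
  ext σ
  constructor
  · rintro ⟨g, rfl⟩
    exact ⟨g⁻¹, rfl⟩
  · rintro ⟨g, rfl⟩
    exact ⟨g⁻¹, by simp [RpermInvHom]⟩

lemma RpermInvHom_injective (hm : 0 < m) : Function.Injective (RpermInvHom m G) := by
  intro g h hgh
  simpa [RpermInvHom] using congrArg (fun σ : Perm (Fin m × G) => (σ (⟨0, hm⟩, 1)).2) hgh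

lemma nonempty_map_conj_RG_mulEquiv (hm : 0 < m) (e : Perm (Fin m × G)) :
    Nonempty ((RG m G).map (MulAut.conj e).toMonoidHom ≃* G) := by
  rw [← range_RpermInvHom, MonoidHom.map_range]
  exact ⟨(MonoidHom.ofInjective ((MulAut.conj e).injective.comp (RpermInvHom_injective hm))).symm⟩

end Rperm

section Conj

variable {N : Type*} [Group N]

lemma Subgroup.map_conj_mul (a b : N) (K : Subgroup N) :
    K.map (MulAut.conj (a * b)).toMonoidHom
      = (K.map (MulAut.conj b).toMonoidHom).map (MulAut.conj a).toMonoidHom := by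
  rw [Subgroup.map_map, map_mul]
  rfl

lemma Subgroup.map_conj_one (K : Subgroup N) : K.map (MulAut.conj (1 : N)).toMonoidHom = K := by
  rw [map_one]
  exact K.map_id

lemma Subgroup.eq_map_conj_inv_of_map_conj_eq {a : N} {K L : Subgroup N}
    (h : K.map (MulAut.conj a).toMonoidHom = L) : K = L.map (MulAut.conj a⁻¹).toMonoidHom := by
  rw [← h, ← Subgroup.map_conj_mul, inv_mul_cancel, Subgroup.map_conj_one]

end Conj

section Semiregular

variable {α : Type*}

def IsSemiregular (H : Subgroup (Perm α)) : Prop :=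
  ∀ h ∈ H, ∀ v : α, h v = v → h = 1

lemma IsSemiregular.stabilizer_eq_bot {H : Subgroup (Perm α)} (hH : IsSemiregular H) (v : α) :
    MulAction.stabilizer H v = ⊥ :=
  (Subgroup.eq_bot_iff_forall _).mpr fun h hv => Subtype.ext (hH h h.2 v hv)

lemma IsSemiregular.map_conj {H : Subgroup (Perm α)} (hH : IsSemiregular H) (e : Perm α) :
    IsSemiregular (H.map (MulAut.conj e).toMonoidHom) := by
  rintro _ ⟨h, hh, rfl⟩ v hv
  have hfix : h (e⁻¹ v) = e⁻¹ v := by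
    simpa [MulAut.conj_apply, Perm.mul_apply, eq_symm_apply] using hv
  simp [hH h hh _ hfix]

lemma isSemiregular_RG {G : Type*} [Group G] (m : ℕ) : IsSemiregular (RG m G) := by
  rintro _ ⟨g, rfl⟩ v hv
  obtain rfl : g = 1 := mul_eq_left.mp (congrArg Prod.snd hv)
  exact Equiv.ext fun v => by simp

end Semiregular

lemma MulAction.selfEquivOrbitsQuotientProd_smul {H X : Type*} [Group H] [MulAction H X]
    (hfree : ∀ x : X, stabilizer H x = ⊥) (h : H) (x : X) :
    selfEquivOrbitsQuotientProd hfree (h • x)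
      = ((selfEquivOrbitsQuotientProd hfree x).1, h * (selfEquivOrbitsQuotientProd hfree x).2) := by
  obtain ⟨⟨ω, k⟩, rfl⟩ := (selfEquivOrbitsQuotientProd hfree).symm.surjective x
  rw [apply_symm_apply, ← eq_symm_apply]
  exact (mul_smul h k ω.out).symm

section Relabel

variable {G : Type*} [Group G] {m : ℕ}

/-- The relabelling is `v ↦ (orbit of v, (φ k)⁻¹)` where `v = k · (orbit representative)`. -/
lemma IsSemiregular.exists_conj_eq_Rperm [Finite G] {H : Subgroup (Perm (Fin m × G))}
    (hH : IsSemiregular H) (φ : H ≃* G) :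
    ∃ e : Perm (Fin m × G), ∀ h : H, e * h * e⁻¹ = Rperm m (φ h)⁻¹ := by
  set ψ := MulAction.selfEquivOrbitsQuotientProd hH.stabilizer_eq_bot
  have hcard : Nat.card (MulAction.orbitRel.Quotient H (Fin m × G)) = m := by
    have h := Nat.card_congr ψ
    rw [Nat.card_prod, Nat.card_prod, Nat.card_congr φ.toEquiv, Nat.card_fin] at h
    exact (Nat.eq_of_mul_eq_mul_right Nat.card_pos h).symm
  let e : Perm (Fin m × G) :=
    ψ.trans ((Finite.equivFinOfCardEq hcard).prodCongr (φ.toEquiv.trans (Equiv.inv G)))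
  refine ⟨e, fun h => ?_⟩
  rw [mul_inv_eq_iff_eq_mul]
  ext v : 1
  change e (h • v) = Rperm m (φ h)⁻¹ (e v)
  simp [e, ψ, MulAction.selfEquivOrbitsQuotientProd_smul]

lemma map_conj_eq_RG_of_conj_eq_Rperm {H : Subgroup (Perm (Fin m × G))} (φ : H ≃* G)
    {e : Perm (Fin m × G)} (he : ∀ h : H, e * h * e⁻¹ = Rperm m (φ h)⁻¹) :
    H.map (MulAut.conj e).toMonoidHom = RG m G := by
  ext σ
  constructor
  · rintro ⟨h, hh, rfl⟩
    exact ⟨(φ ⟨h, hh⟩)⁻¹, he ⟨h, hh⟩⟩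
  · rintro ⟨g, rfl⟩
    exact ⟨φ.symm g⁻¹, (φ.symm g⁻¹).2, by simpa using he (φ.symm g⁻¹)⟩

lemma IsSemiregular.exists_map_conj_eq_RG [Finite G] {H : Subgroup (Perm (Fin m × G))}
    (hH : IsSemiregular H) (φ : H ≃* G) :
    ∃ e : Perm (Fin m × G), H.map (MulAut.conj e).toMonoidHom = RG m G :=
  let ⟨e, he⟩ := hH.exists_conj_eq_Rperm φ
  ⟨e, map_conj_eq_RG_of_conj_eq_Rperm φ he⟩

end Relabel

section Digraph

variable {G : Type*} [Group G] {m : ℕ} {S T : Fin m → Fin m → Set G}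

def IsDigraphIso (S T : Fin m → Fin m → Set G) (e : Perm (Fin m × G)) : Prop :=
  ∀ u v, arcRel m S u v ↔ arcRel m T (e u) (e v)

lemma RG_le_digraphAut (T : Fin m → Fin m → Set G) : RG m G ≤ digraphAut m G T := by
  rintro _ ⟨g, rfl⟩ u v
  simp [arcRel, mul_assoc]

lemma IsDigraphIso.inv_mul_mem_digraphAut {e n : Perm (Fin m × G)} (he : IsDigraphIso S T e)
    (hn : IsDigraphIso S T n) : e⁻¹ * n ∈ digraphAut m G S := fun u v =>
  calc arcRel m S ((e⁻¹ * n) u) ((e⁻¹ * n) v) ↔ arcRel m T (n u) (n v) := by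
        rw [he]; simp [Perm.mul_apply]
    _ ↔ arcRel m S u v := (hn u v).symm

lemma IsDigraphIso.mul_right {e a : Perm (Fin m × G)} (he : IsDigraphIso S T e)
    (ha : a ∈ digraphAut m G S) : IsDigraphIso S T (e * a) := fun u v =>
  (ha u v).symm.trans (he (a u) (a v))

lemma IsDigraphIso.map_conj_inv_RG_le {e : Perm (Fin m × G)} (he : IsDigraphIso S T e) :
    (RG m G).map (MulAut.conj e⁻¹).toMonoidHom ≤ digraphAut m G S := by
  rintro _ ⟨σ, hσ, rfl⟩ u v
  calc arcRel m S ((e⁻¹ * σ * e) u) ((e⁻¹ * σ * e) v) ↔ arcRel m T (σ (e u)) (σ (e v)) := by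
        rw [he]; simp [Perm.mul_apply]
    _ ↔ arcRel m T (e u) (e v) := RG_le_digraphAut T hσ (e u) (e v)
    _ ↔ arcRel m S u v := (he u v).symm

lemma eq_arcRel_of_Rperm_invariant (R : Fin m × G → Fin m × G → Prop)
    (hR : ∀ g u v, R (Rperm m g u) (Rperm m g v) ↔ R u v) (u v : Fin m × G) :
    R u v ↔ arcRel m (fun i j => {g | R (i, 1) (j, g)}) u v := by
  simpa [arcRel] using hR u.2 (u.1, 1) (v.1, v.2 * u.2⁻¹)

lemma exists_isDigraphIso_of_map_conj_inv_RG_le (hS : ∀ i, (1 : G) ∉ S i i)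
    {e : Perm (Fin m × G)} (hle : (RG m G).map (MulAut.conj e⁻¹).toMonoidHom ≤ digraphAut m G S) :
    ∃ T : Fin m → Fin m → Set G, (∀ i, (1 : G) ∉ T i i) ∧ IsDigraphIso S T e := by
  let R u v := arcRel m S (e⁻¹ u) (e⁻¹ v)
  have hR : ∀ g u v, R (Rperm m g u) (Rperm m g v) ↔ R u v := fun g u v => by
    have hmem := hle ⟨Rperm m g, ⟨g, rfl⟩, rfl⟩ (e⁻¹ u) (e⁻¹ v)
    simpa [R, MulAut.conj_apply, Perm.mul_apply] using hmem
  refine ⟨fun i j => {g | R (i, 1) (j, g)}, fun i h1 => hS (e⁻¹ (i, 1)).1 ?_, fun u v => ?_⟩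
  · simpa [R, arcRel] using h1
  · rw [← eq_arcRel_of_Rperm_invariant R hR]
    simp [R]

end Digraph

section MCI

variable {G : Type*} [Group G] {m : ℕ} {S : Fin m → Fin m → Set G}

lemma IsMCI.exists_map_conj_RG_eq [Finite G] (hS : ∀ i, (1 : G) ∉ S i i) (hMCI : IsMCI m G S)
    {H : Subgroup (Perm (Fin m × G))} (hle : H ≤ digraphAut m G S) (hH : IsSemiregular H)
    (φ : H ≃* G) : ∃ a ∈ digraphAut m G S, (RG m G).map (MulAut.conj a).toMonoidHom = H := by
  obtain ⟨e, he⟩ := hH.exists_map_conj_eq_RG φ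
  have hHe := Subgroup.eq_map_conj_inv_of_map_conj_eq he
  obtain ⟨T, hT, heT⟩ := exists_isDigraphIso_of_map_conj_inv_RG_le hS (hHe ▸ hle)
  obtain ⟨n, hn, hnT⟩ := hMCI T hT ⟨e, heT⟩
  have hnRG : (RG m G).map (MulAut.conj n).toMonoidHom = RG m G :=
    Subgroup.mem_normalizer_iff_map_conj_eq.mp hn
  refine ⟨e⁻¹ * n, heT.inv_mul_mem_digraphAut hnT, ?_⟩
  rw [Subgroup.map_conj_mul, hnRG, hHe]

lemma isMCI_of_forall_map_conj_RG_eq (hm : 0 < m)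
    (hconj : ∀ H : Subgroup (Perm (Fin m × G)), H ≤ digraphAut m G S → IsSemiregular H →
      Nonempty (H ≃* G) → ∃ a ∈ digraphAut m G S, (RG m G).map (MulAut.conj a).toMonoidHom = H) :
    IsMCI m G S := by
  rintro T - ⟨e, he⟩
  obtain ⟨a, ha, hmap⟩ := hconj _ (IsDigraphIso.map_conj_inv_RG_le he)
    ((isSemiregular_RG m).map_conj e⁻¹) (nonempty_map_conj_RG_mulEquiv hm e⁻¹)
  have hnRG : (RG m G).map (MulAut.conj (e * a)).toMonoidHom = RG m G := by
    rw [Subgroup.map_conj_mul, hmap, ← Subgroup.map_conj_mul, mul_inv_cancel,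
      Subgroup.map_conj_one]
  exact ⟨e * a, Subgroup.mem_normalizer_iff_map_conj_eq.mpr hnRG, IsDigraphIso.mul_right he ha⟩

lemma isMCI_zero (S : Fin 0 → Fin 0 → Set G) : IsMCI 0 G S :=
  fun _ _ _ => ⟨1, Subgroup.one_mem _, fun u => u.1.elim0⟩

end MCI

/-- **Babai-type criterion for mCI.** An `m`-Cayley digraph
`Γ = Cay(G, S_{i,j})` of a finite group `G` is mCI if and only if every
semiregular subgroup of `Aut(Γ)` isomorphic to `G` is conjugate to `R(G)` in
`Aut(Γ)`. -/
theorem isMCI_iff_conjugate (G : Type*) [Group G] [Finite G] (m : ℕ)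
    (S : Fin m → Fin m → Set G) (hS : ∀ i, (1 : G) ∉ S i i) :
    IsMCI m G S ↔
      ∀ H : Subgroup (Equiv.Perm (Fin m × G)), H ≤ digraphAut m G S →
        (∀ h ∈ H, ∀ v : Fin m × G, h v = v → h = 1) →
        Nonempty (H ≃* G) →
        ∃ a ∈ digraphAut m G S,
          Subgroup.map (MulAut.conj a).toMonoidHom (RG m G) = H := by
  refine ⟨fun hMCI H hle hH ⟨φ⟩ => hMCI.exists_map_conj_RG_eq hS hle hH φ, fun hconj => ?_⟩
  rcases Nat.eq_zero_or_pos m with rfl | hm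
  · exact isMCI_zero S
  · exact isMCI_of_forall_map_conj_RG_eq hm hconj
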